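/- arXiv:1312.7312 — 5 statements merged into one kernel-verified Lean document; each statement's English description precedes it below -/
import Mathlib

section
/- Define a relation on pairs (P, r) with P ∈ ℚ[x] (decorated Hilbert polynomial) and r ∈ ℕ_{>0} (rank) by (P₁,r₁) ≼ (P₂,r₂) iff P₁·r₂ ⪯ P₂·r₁ (where ⪯ is eventual comparison of polynomials). Then ≼ restricted to subsheaves (combined with inclusion of sheaves) is a partial order, and any nonempty collection of subsheaves of a Noetherian sheaf has a ≼-maximal element. -/
/-
The inclusion component already makes `≼` antisymmetric, and it makes a `≼`-maximal element of a
family of submodules out of any `⊆`-maximal one, which exists by Noetherianity. Transitivity of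
the polynomial component is the cross-multiplication argument: from `r_G P_F ⪯ r_F P_G` and
`r_H P_G ⪯ r_G P_H` one gets `r_G r_H P_F ⪯ r_G r_F P_H`, and `r_G > 0` can be cancelled.
-/

/-- Eventual comparison of polynomials: `p ⪯ q` iff `p(m) ≤ q(m)` for all `m ≫ 0`. -/
def polyLE (p q : Polynomial ℚ) : Prop := ∃ m₀ : ℚ, ∀ m ≥ m₀, p.eval m ≤ q.eval m

/-- The relation `F₁ ≼ F₂ ⟺ F₁ ⊆ F₂ ∧ P_{F₁}·rk F₂ ⪯ P_{F₂}·rk F₁` on subsheaves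
(the `P` here being the ε-decorated Hilbert polynomial). -/
def decOrder {R E : Type} [CommRing R] [AddCommGroup E] [Module R E]
    (P : Submodule R E → Polynomial ℚ) (rk : Submodule R E → ℕ)
    (F₁ F₂ : Submodule R E) : Prop :=
  F₁ ≤ F₂ ∧ polyLE ((rk F₂ : ℚ) • P F₁) ((rk F₁ : ℚ) • P F₂)

open Polynomial

theorem polyLE_refl (p : ℚ[X]) : polyLE p p :=
  ⟨0, fun _ _ => le_rfl⟩

theorem polyLE_smul_trans {p q r : ℚ[X]} {a b c : ℚ} (ha : 0 ≤ a) (hb : 0 < b) (hc : 0 ≤ c)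
    (h₁ : polyLE (b • p) (a • q)) (h₂ : polyLE (c • q) (b • r)) : polyLE (c • p) (a • r) := by
  obtain ⟨m₁, h₁⟩ := h₁
  obtain ⟨m₂, h₂⟩ := h₂
  refine ⟨max m₁ m₂, fun m hm => ?_⟩
  have e₁ := h₁ m (le_of_max_le_left hm)
  have e₂ := h₂ m (le_of_max_le_right hm)
  simp only [eval_smul, smul_eq_mul] at e₁ e₂ ⊢
  refine le_of_mul_le_mul_left ?_ hb
  calc b * (c * p.eval m) = c * (b * p.eval m) := by ring
    _ ≤ c * (a * q.eval m) := mul_le_mul_of_nonneg_left e₁ hc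
    _ = a * (c * q.eval m) := by ring
    _ ≤ a * (b * r.eval m) := mul_le_mul_of_nonneg_left e₂ ha
    _ = b * (a * r.eval m) := by ring

section decOrder

variable {R E : Type} [CommRing R] [AddCommGroup E] [Module R E]
  (P : Submodule R E → ℚ[X]) (rk : Submodule R E → ℕ)

theorem decOrder_refl (F : Submodule R E) : decOrder P rk F F :=
  ⟨le_rfl, polyLE_refl _⟩

variable {P rk}

theorem decOrder_trans {F G H : Submodule R E} (hG : 0 < rk G)
    (hFG : decOrder P rk F G) (hGH : decOrder P rk G H) : decOrder P rk F H :=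
  ⟨hFG.1.trans hGH.1,
    polyLE_smul_trans (Nat.cast_nonneg _) (Nat.cast_pos.mpr hG) (Nat.cast_nonneg _) hFG.2 hGH.2⟩

theorem decOrder_antisymm {F G : Submodule R E} (hFG : decOrder P rk F G)
    (hGF : decOrder P rk G F) : F = G :=
  le_antisymm hFG.1 hGF.1

theorem exists_decOrder_maximal [IsNoetherian R E] {S : Set (Submodule R E)} (hS : S.Nonempty) :
    ∃ F ∈ S, ∀ G ∈ S, decOrder P rk F G → G = F := by
  obtain ⟨F, hF⟩ := WellFoundedGT.exists_maximal inferInstance S hS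
  exact ⟨F, hF.prop, fun G hG hFG => le_antisymm (hF.2 hG hFG.1) hFG.1⟩

end decOrder

/-- The relation `≼` on subsheaves (modelled as submodules of a Noetherian module,
with an abstract decorated Hilbert polynomial `P` and positive rank function `rk`)
is a partial order: reflexive, transitive and antisymmetric; moreover every
nonempty collection of subsheaves has a `≼`-maximal element. -/
theorem stmt_3 {R E : Type} [CommRing R] [AddCommGroup E] [Module R E]
    [IsNoetherian R E]
    (P : Submodule R E → Polynomial ℚ) (rk : Submodule R E → ℕ)
    (hrk : ∀ F : Submodule R E, 0 < rk F) :
    (∀ F : Submodule R E, decOrder P rk F F) ∧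
      (∀ F G H : Submodule R E, decOrder P rk F G → decOrder P rk G H → decOrder P rk F H) ∧
      (∀ F G : Submodule R E, decOrder P rk F G → decOrder P rk G F → F = G) ∧
      (∀ S : Set (Submodule R E), S.Nonempty →
        ∃ F ∈ S, ∀ G ∈ S, decOrder P rk F G → G = F) :=
  ⟨decOrder_refl P rk, fun _ G _ => decOrder_trans (hrk G), fun _ _ => decOrder_antisymm,
    fun _ => exists_decOrder_maximal⟩
end

section
/- ε-semistability implies semistability: if (E, φ) is an ε-semistable decorated sheaf with respect to δ, then for every weighted filtration (E^•, α) indexed by I one has P_I(E^•,α) + δ·μ_I(E^•,α;φ) ⪰ 0. -/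
open Filter Polynomial in
theorem polyEvPos (p : Polynomial ℚ) (h : 0 < p.leadingCoeff) :
    ∃ m₀ : ℚ, ∀ m ≥ m₀, 0 ≤ p.eval m := by
  rcases le_or_gt p.degree 0 with hd | hd
  · have hp := degree_le_zero_iff.1 hd
    rw [hp, leadingCoeff_C] at h
    exact ⟨0, fun m _ => by rw [hp, eval_C]; exact h.le⟩
  · exact eventually_atTop.1
      ((Polynomial.tendsto_atTop_of_leadingCoeff_nonneg p hd h.le).eventually_ge_atTop 0)

open Filter Polynomial Finset in
/-- ε-semistability implies semistability: if the decorated sheaf `(E, φ)` is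
ε-semistable w.r.t. `δ`, then for every weighted filtration `(E^•, α)` one has
`P_I(E^•,α) + δ·μ_I(E^•,α;φ) ⪰ 0`.  The sheaf is modelled as a module `E` with
abstract rank and Hilbert polynomial functions on its submodules; the predicate
`T f` records that `φ` is not identically zero on `(f 1 ⊗ ⋯ ⊗ f a)^{⊕b}` (it is
monotone in each argument), and `ε F = 1` iff `T (fun _ => F)`.  A weighted
filtration is a strictly increasing chain `ℰ` of saturated subsheaves ending at
`E = ⊤` with positive weights `α`; `μ_I` is the greatest value of `−Σ_m γ(t m)`
over tuples `t` with `T (ℰ ∘ t)`, where `γ` is the standard weight vector. -/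
theorem stmt_7 {R E : Type} [CommRing R] [AddCommGroup E] [Module R E]
    (a : ℕ) (rk : Submodule R E → ℕ) (P : Submodule R E → Polynomial ℚ)
    (T : (Fin a → Submodule R E) → Prop)
    (hTmono : ∀ f g : Fin a → Submodule R E, (∀ i, f i ≤ g i) → T f → T g)
    (ε : Submodule R E → ℕ)
    (hε01 : ∀ F : Submodule R E, ε F = 0 ∨ ε F = 1)
    (hε1 : ∀ F : Submodule R E, ε F = 1 ↔ T (fun _ => F))
    (δ : Polynomial ℚ) (hδ : 0 < δ.leadingCoeff)
    (hεss : ∀ F : Submodule R E, F ≠ ⊥ → F ≠ ⊤ →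
      polyLE ((rk (⊤ : Submodule R E) : ℚ) • (P F - ((a : ℚ) * (ε F : ℚ)) • δ))
             ((rk F : ℚ) • (P ⊤ - (a : ℚ) • δ))) :
    ∀ (s : ℕ) (ℰ : Fin (s + 1) → Submodule R E), StrictMono ℰ →
      ℰ (Fin.last s) = ⊤ → (∀ j : Fin s, ℰ j.castSucc ≠ ⊥) →
      ∀ α : Fin s → ℚ, (∀ j, 0 < α j) →
      ∀ μ : ℚ,
        IsGreatest {x : ℚ | ∃ t : Fin a → Fin (s + 1),
          T (fun m => ℰ (t m)) ∧
          x = -∑ m : Fin a,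
            ((∑ j : Fin s, α j * (rk (ℰ j.castSucc) : ℚ)) -
              (rk (⊤ : Submodule R E) : ℚ) *
                ∑ j ∈ Finset.univ.filter (fun j : Fin s => t m ≤ j.castSucc), α j)} μ →
        polyLE 0
          ((∑ j : Fin s, α j •
              ((rk (ℰ j.castSucc) : ℚ) • P ⊤ -
                (rk (⊤ : Submodule R E) : ℚ) • P (ℰ j.castSucc))) + μ • δ) := by
  classical
  intro s ℰ hmono hlast hbot α hα μ hμ
  set r : ℚ := (rk (⊤ : Submodule R E) : ℚ) with hr
  set rkj : Fin s → ℚ := fun j => (rk (ℰ j.castSucc) : ℚ) with hrkj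
  set e : Fin s → ℚ := fun j => (ε (ℰ j.castSucc) : ℚ) with he
  -- the top piece satisfies T
  obtain ⟨t₀, ht₀, -⟩ := hμ.1
  have hTtop : T (fun _ => ℰ (Fin.last s)) :=
    hTmono _ _ (fun i => by rw [hlast]; exact le_top) ht₀
  -- minimal index where T holds on the constant tuple
  set K : Finset (Fin (s + 1)) := Finset.univ.filter (fun k => T fun _ => ℰ k) with hK
  have hKne : K.Nonempty := ⟨Fin.last s, by simp [hK, hTtop]⟩
  set k₀ : Fin (s + 1) := K.min' hKne with hk₀
  have hTk : T (fun _ => ℰ k₀) := by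
    have h := Finset.mem_filter.1 (K.min'_mem hKne)
    exact h.2
  have hεiff : ∀ j : Fin s, e j = if k₀ ≤ j.castSucc then 1 else 0 := by
    intro j
    by_cases h : k₀ ≤ j.castSucc
    · rw [if_pos h]
      have hT : T (fun _ => ℰ j.castSucc) :=
        hTmono _ _ (fun _ => hmono.monotone h) hTk
      show (ε (ℰ j.castSucc) : ℚ) = 1
      rw [(hε1 _).2 hT]; norm_num
    · rw [if_neg h]
      rcases hε01 (ℰ j.castSucc) with h0 | h1
      · show (ε (ℰ j.castSucc) : ℚ) = 0
        rw [h0]; norm_num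
      · exfalso
        exact h (K.min'_le _ (by rw [hK, Finset.mem_filter]; exact ⟨Finset.mem_univ _, (hε1 _).1 h1⟩))
  -- the lower bound for μ from the constant tuple
  have hμx : -∑ _m : Fin a,
      ((∑ j : Fin s, α j * (rk (ℰ j.castSucc) : ℚ)) -
        (rk (⊤ : Submodule R E) : ℚ) *
          ∑ j ∈ Finset.univ.filter (fun j : Fin s => k₀ ≤ j.castSucc), α j) ≤ μ :=
    hμ.2 ⟨fun _ => k₀, hTk, rfl⟩
  have hSsum : (∑ j ∈ Finset.univ.filter (fun j : Fin s => k₀ ≤ j.castSucc), α j)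
      = ∑ j : Fin s, α j * e j := by
    rw [Finset.sum_filter]
    refine Finset.sum_congr rfl fun j _ => ?_
    rw [hεiff j]
    split <;> simp
  rw [Finset.sum_const, Finset.card_univ, Fintype.card_fin, nsmul_eq_mul, hSsum] at hμx
  have hμx' : (∑ j : Fin s, α j * ((a : ℚ) * (r * e j - rkj j))) ≤ μ := by
    have hS2 : (∑ j : Fin s, α j * ((a : ℚ) * (r * e j - rkj j)))
        = (a : ℚ) * (r * ∑ j : Fin s, α j * e j) - (a : ℚ) * ∑ j : Fin s, α j * rkj j := by
      simp only [Finset.mul_sum, ← Finset.sum_sub_distrib]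
      exact Finset.sum_congr rfl fun j _ => by ring
    have heq : (∑ j : Fin s, α j * ((a : ℚ) * (r * e j - rkj j)))
        = -((a : ℚ) * ((∑ j : Fin s, α j * rkj j) - r * ∑ j : Fin s, α j * e j)) := by
      rw [hS2]; ring
    rw [heq]
    exact hμx
  -- per-index semistability inequalities
  have hne : ∀ j : Fin s, ℰ j.castSucc ≠ ⊤ := fun j => by
    have := hmono (Fin.castSucc_lt_last j)
    rw [hlast] at this
    exact ne_of_lt this
  have hj : ∀ j : Fin s, ∀ᶠ m in atTop,
      r * ((P (ℰ j.castSucc)).eval m - (a : ℚ) * e j * δ.eval m)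
        ≤ rkj j * ((P ⊤).eval m - (a : ℚ) * δ.eval m) := by
    intro j
    obtain ⟨M, hM⟩ := hεss (ℰ j.castSucc) (hbot j) (hne j)
    refine eventually_atTop.2 ⟨M, fun m hm => ?_⟩
    have := hM m hm
    simpa [eval_smul, smul_eq_mul, mul_sub, mul_assoc, mul_comm, mul_left_comm] using this
  obtain ⟨M0, hM0⟩ := polyEvPos δ hδ
  have hδev : ∀ᶠ m in atTop, (0:ℚ) ≤ δ.eval m := eventually_atTop.2 ⟨M0, hM0⟩
  have hallj : ∀ᶠ m in atTop, ∀ j : Fin s,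
      r * ((P (ℰ j.castSucc)).eval m - (a : ℚ) * e j * δ.eval m)
        ≤ rkj j * ((P ⊤).eval m - (a : ℚ) * δ.eval m) := eventually_all.2 hj
  have final : ∀ᶠ m in atTop, (0:ℚ) ≤
      ((∑ j : Fin s, α j •
          ((rk (ℰ j.castSucc) : ℚ) • P ⊤ -
            (rk (⊤ : Submodule R E) : ℚ) • P (ℰ j.castSucc))) + μ • δ).eval m := by
    filter_upwards [hδev, hallj] with m hδm hjm
    rw [eval_add, eval_finset_sum, eval_smul, smul_eq_mul]
    simp only [eval_smul, eval_sub, smul_eq_mul]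
    have key : ∀ j : Fin s, 0 ≤ α j * (rkj j * ((P ⊤).eval m - (a:ℚ) * δ.eval m)
        - r * ((P (ℰ j.castSucc)).eval m - (a:ℚ) * e j * δ.eval m)) :=
      fun j => mul_nonneg (hα j).le (sub_nonneg.2 (hjm j))
    have hsum : (0:ℚ) ≤ ∑ j : Fin s, α j * (rkj j * ((P ⊤).eval m - (a:ℚ) * δ.eval m)
        - r * ((P (ℰ j.castSucc)).eval m - (a:ℚ) * e j * δ.eval m)) :=
      Finset.sum_nonneg fun j _ => key j
    have hexp : (∑ j : Fin s, α j * (rkj j * ((P ⊤).eval m - (a:ℚ) * δ.eval m)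
        - r * ((P (ℰ j.castSucc)).eval m - (a:ℚ) * e j * δ.eval m)))
        = (∑ j : Fin s, α j * (rkj j * (P ⊤).eval m - r * (P (ℰ j.castSucc)).eval m))
          + (∑ j : Fin s, α j * ((a : ℚ) * (r * e j - rkj j))) * δ.eval m := by
      rw [Finset.sum_mul, ← Finset.sum_add_distrib]
      exact Finset.sum_congr rfl fun j _ => by ring
    rw [hexp] at hsum
    have hmul : (∑ j : Fin s, α j * ((a : ℚ) * (r * e j - rkj j))) * δ.eval m
        ≤ μ * δ.eval m := mul_le_mul_of_nonneg_right hμx' hδm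
    calc (0:ℚ) ≤ _ := hsum
      _ ≤ (∑ j : Fin s, α j * (rkj j * (P ⊤).eval m - r * (P (ℰ j.castSucc)).eval m))
            + μ * δ.eval m := by linarith
      _ = _ := by
        rw [hr, hrkj]
  obtain ⟨m₀, hm₀⟩ := eventually_atTop.1 final
  refine ⟨m₀, fun m hm => ?_⟩
  simpa using hm₀ m hm
end

section
/- Subadditivity of k: for any subsheaves F, G of a decorated sheaf (E,φ), k(F,E) + k(G,E) ≥ k(F+G, E). (Proof idea: if φ is nonzero on a product with t factors from F+G, expand (f+g)^{⊗t} binomially and use vanishing of all terms with more than k(F,E) factors from F to extract a nonvanishing term with at least t − k(F,E) factors from G.) -/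
open scoped Classical

/-- Subadditivity of `k`: abstract multilinear version.  Let `φ : V^{⊗a} → W` be
a multilinear map, and for a subspace `U ⊆ V` let `k U` be the greatest `t` such
that `φ` is nonzero on some ordering of `U^{⊗t} ⊗ V^{⊗(a−t)}` (i.e. there is an
assignment of subspaces `U` or `V` to the `a` slots, at least `t` of them `U`,
and vectors in those slots on which `φ` is nonzero).  Then for subspaces `F`,
`G` one has `k(F+G) ≤ k(F) + k(G)`. -/
theorem stmt_10 {K V W : Type*} [Field K] [AddCommGroup V] [Module K V]
    [AddCommGroup W] [Module K W]
    (a : ℕ) (φ : MultilinearMap K (fun _ : Fin a => V) W)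
    (k : Submodule K V → ℕ)
    (hk : ∀ U : Submodule K V, IsGreatest {t : ℕ | t = 0 ∨
      ∃ f : Fin a → Submodule K V, (∀ i, f i = U ∨ f i = ⊤) ∧
        t ≤ (Finset.univ.filter (fun i => f i = U)).card ∧
        ∃ v : (i : Fin a) → V, (∀ i, v i ∈ f i) ∧ φ v ≠ 0} (k U))
    (F G : Submodule K V) :
    k (F ⊔ G) ≤ k F + k G := by
  rcases (hk (F ⊔ G)).1 with h0 | ⟨f, hf, ht, v, hv, hφ⟩
  · omega
  -- decompose v i = x i + y i on the (F ⊔ G)-slots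
  have hdec : ∀ i, ∃ p : V × V, (f i = F ⊔ G → p.1 ∈ F ∧ p.2 ∈ G) ∧ p.1 + p.2 = v i := by
    intro i
    by_cases h : f i = F ⊔ G
    · have hmem : v i ∈ F ⊔ G := h ▸ hv i
      rcases Submodule.mem_sup.mp hmem with ⟨p, hp, q, hq, hpq⟩
      exact ⟨(p, q), fun _ => ⟨hp, hq⟩, hpq⟩
    · exact ⟨(v i, 0), fun h' => absurd h' h, add_zero _⟩
  choose p hpmem hpsum using hdec
  set x : Fin a → V := fun i => (p i).1 with hx
  set y : Fin a → V := fun i => (p i).2 with hy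
  have hvxy : v = x + y := by
    funext i; exact (hpsum i).symm
  have hsum : φ v = ∑ s : Finset (Fin a), φ (s.piecewise x y) := by
    rw [hvxy]
    exact φ.map_add_univ x y
  -- extract a nonzero term
  have : ∃ s : Finset (Fin a), φ (s.piecewise x y) ≠ 0 := by
    by_contra h
    push_neg at h
    apply hφ
    rw [hsum, Finset.sum_eq_zero fun s _ => h s]
  obtain ⟨s, hs⟩ := this
  set slots : Finset (Fin a) := Finset.univ.filter (fun i => f i = F ⊔ G) with hslots
  set T : Finset (Fin a) := slots ∩ s with hT
  set Tc : Finset (Fin a) := slots \ s with hTc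
  -- T.card ≤ k F
  have h1 : T.card ≤ k F := by
    apply (hk F).2
    right
    refine ⟨fun i => if i ∈ T then F else ⊤, fun i => ?_, ?_, s.piecewise x y, fun i => ?_, hs⟩
    · by_cases hi : i ∈ T <;> simp [hi]
    · apply Finset.card_le_card
      intro i hi
      simp only [Finset.mem_filter, Finset.mem_univ, true_and, if_pos hi]
    · by_cases hi : i ∈ T
      · have his : i ∈ s := (Finset.mem_inter.mp hi).2
        have hif : f i = F ⊔ G := by
          have := (Finset.mem_inter.mp hi).1
          simpa [hslots] using this
        simp only [if_pos hi, Finset.piecewise_eq_of_mem _ _ _ his]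
        exact (hpmem i hif).1
      · simp [hi]
  -- Tc.card ≤ k G
  have h2 : Tc.card ≤ k G := by
    apply (hk G).2
    right
    refine ⟨fun i => if i ∈ Tc then G else ⊤, fun i => ?_, ?_, s.piecewise x y, fun i => ?_, hs⟩
    · by_cases hi : i ∈ Tc <;> simp [hi]
    · apply Finset.card_le_card
      intro i hi
      simp only [Finset.mem_filter, Finset.mem_univ, true_and, if_pos hi]
    · by_cases hi : i ∈ Tc
      · have his : i ∉ s := (Finset.mem_sdiff.mp hi).2
        have hif : f i = F ⊔ G := by
          have := (Finset.mem_sdiff.mp hi).1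
          simpa [hslots] using this
        simp only [if_pos hi, Finset.piecewise_eq_of_notMem _ _ _ his]
        exact (hpmem i hif).2
      · simp [hi]
  have hcard : T.card + Tc.card = slots.card := Finset.card_inter_add_card_sdiff slots s
  have : k (F ⊔ G) ≤ slots.card := ht
  omega
end

section
/- For a decorated sheaf (E, φ) of rank 2, δ-(semi)stability (tested against all weighted filtrations) is equivalent to k-(semi)stability (tested against single subsheaves): every weighted filtration of a rank-2 torsion-free sheaf has length at most one, and P(0⊂F⊂E, 1) + δ·μ(0⊂F⊂E, 1; φ) = rk(F)·P_E − rk(E)·P_F + δ·(rk(E)·k(F,E) − a·rk(F)). -/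
open scoped Classical

/-- Strict eventual comparison of polynomials. -/
def polyLT (p q : Polynomial ℚ) : Prop := ∃ m₀ : ℚ, ∀ m ≥ m₀, p.eval m < q.eval m

lemma polyLE_smul_aux {c : ℚ} (hc : 0 ≤ c) {p : Polynomial ℚ} (h : polyLE 0 p) :
    polyLE 0 (c • p) := by
  obtain ⟨m₀, hm⟩ := h
  refine ⟨m₀, fun m hm' => ?_⟩
  have := hm m hm'
  simp only [Polynomial.eval_zero, Polynomial.smul_eq_C_mul, Polynomial.eval_mul,
    Polynomial.eval_C] at this ⊢
  exact mul_nonneg hc this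

lemma polyLT_smul_aux {c : ℚ} (hc : 0 < c) {p : Polynomial ℚ} (h : polyLT 0 p) :
    polyLT 0 (c • p) := by
  obtain ⟨m₀, hm⟩ := h
  refine ⟨m₀, fun m hm' => ?_⟩
  have := hm m hm'
  simp only [Polynomial.eval_zero, Polynomial.smul_eq_C_mul, Polynomial.eval_mul,
    Polynomial.eval_C] at this ⊢
  exact mul_pos hc this

lemma key_aux {R E : Type} [CommRing R] [AddCommGroup E] [Module R E]
    (a : ℕ) (rk : Submodule R E → ℕ)
    (T : (Fin a → Submodule R E) → Prop)
    (hφ : T (fun _ => ⊤))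
    (k : Submodule R E → ℕ)
    (hk : ∀ F : Submodule R E, IsGreatest {t : ℕ | t = 0 ∨
      ∃ f : Fin a → Submodule R E, T f ∧ (∀ i, f i = F ∨ f i = ⊤) ∧
        t ≤ (Finset.univ.filter (fun i => f i = F)).card} (k F))
    (F : Submodule R E) (hF : F ≠ ⊤) (c : ℚ) (hc : 0 < c) :
    IsGreatest {x : ℚ | ∃ t : Fin a → Fin 2, T (fun m => if t m = 0 then F else ⊤) ∧
      x = -∑ m : Fin a, (c * (rk F : ℚ) - (rk (⊤ : Submodule R E) : ℚ) * (if t m = 0 then c else 0))}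
      (c * ((rk (⊤ : Submodule R E) : ℚ) * (k F : ℚ) - (a : ℚ) * (rk F : ℚ))) := by
  have hsum : ∀ t : Fin a → Fin 2,
      -∑ m : Fin a, (c * (rk F : ℚ) - (rk (⊤ : Submodule R E) : ℚ) * (if t m = 0 then c else 0))
        = c * ((rk (⊤ : Submodule R E) : ℚ) *
            ((Finset.univ.filter (fun m => t m = 0)).card : ℚ) - (a : ℚ) * (rk F : ℚ)) := by
    intro t
    rw [Finset.sum_sub_distrib, Finset.sum_const, Finset.card_univ, Fintype.card_fin,
      ← Finset.mul_sum, Finset.sum_ite, Finset.sum_const, Finset.sum_const_zero, add_zero]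
    simp only [nsmul_eq_mul, smul_eq_mul]
    ring
  have hcard : ∀ t : Fin a → Fin 2, T (fun m => if t m = 0 then F else ⊤) →
      (Finset.univ.filter (fun m => t m = 0)).card ≤ k F := by
    intro t hT
    apply (hk F).2
    refine Or.inr ⟨fun m => if t m = 0 then F else ⊤, hT,
      fun i => by by_cases h : t i = 0 <;> simp [h], ?_⟩
    apply le_of_eq
    congr 1
    apply Finset.filter_congr
    intro i _
    constructor
    · intro h; simp [h]
    · intro h; by_contra hne; simp only [if_neg hne] at h; exact hF h.symm
  have hach : ∃ t : Fin a → Fin 2, T (fun m => if t m = 0 then F else ⊤) ∧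
      (Finset.univ.filter (fun m => t m = 0)).card = k F := by
    rcases (hk F).1 with h0 | ⟨f, hTf, hor, hle⟩
    · refine ⟨fun _ => 1, by simpa using hφ, ?_⟩
      simp [h0]
    · refine ⟨fun m => if f m = F then 0 else 1, ?_, ?_⟩
      · have : (fun m => if (if f m = F then (0 : Fin 2) else 1) = 0 then F else ⊤) = f := by
          funext m
          rcases hor m with h | h
          · simp [h]
          · simp [h, Ne.symm hF]
        rw [this]; exact hTf
      · have hEq : (Finset.univ.filter (fun m => (if f m = F then (0 : Fin 2) else 1) = 0))
            = Finset.univ.filter (fun i => f i = F) := by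
          apply Finset.filter_congr
          intro i _
          split_ifs with h <;> simp [h]
        rw [hEq]
        exact le_antisymm ((hk F).2 (Or.inr ⟨f, hTf, hor, le_rfl⟩)) hle
  constructor
  · obtain ⟨t, hT, hcd⟩ := hach
    exact ⟨t, hT, by rw [hsum, hcd]⟩
  · rintro x ⟨t, hT, rfl⟩
    rw [hsum]
    apply mul_le_mul_of_nonneg_left _ hc.le
    have h2 : ((Finset.univ.filter (fun m => t m = 0)).card : ℚ) ≤ (k F : ℚ) := by
      exact_mod_cast hcard t hT
    nlinarith [Nat.cast_nonneg (α := ℚ) (rk (⊤ : Submodule R E))]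

/-- For a decorated sheaf `(E,φ)` of rank 2, δ-(semi)stability is equivalent to
k-(semi)stability: (i) every weighted filtration (strictly increasing chain of
nonzero proper saturated subsheaves) has length at most one; (ii) for the
length-one filtration `0 ⊂ F ⊂ E` with weight 1,
`P(0⊂F⊂E,1) + δ·μ(0⊂F⊂E,1;φ) = rk F·P_E − rk E·P_F + δ·(rk E·k(F,E) − a·rk F)`;
(iii) `(E,φ)` is δ-semistable iff it is k-semistable, and δ-stable iff k-stable.
Conventions as in the other statements: `T` is the monotone nonvanishing
predicate of `φ` on tensor products of subsheaves, `k` the associated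
k-function, strict rank monotonicity encodes saturation of the members. -/
theorem stmt_13 {R E : Type} [CommRing R] [AddCommGroup E] [Module R E]
    (a : ℕ) (rk : Submodule R E → ℕ) (P : Submodule R E → Polynomial ℚ)
    (T : (Fin a → Submodule R E) → Prop)
    (hTmono : ∀ f g : Fin a → Submodule R E, (∀ i, f i ≤ g i) → T f → T g)
    (hφ : T (fun _ => ⊤))
    (k : Submodule R E → ℕ)
    (hk : ∀ F : Submodule R E, IsGreatest {t : ℕ | t = 0 ∨
      ∃ f : Fin a → Submodule R E, T f ∧ (∀ i, f i = F ∨ f i = ⊤) ∧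
        t ≤ (Finset.univ.filter (fun i => f i = F)).card} (k F))
    (δ : Polynomial ℚ) (hδ : 0 < δ.leadingCoeff)
    (hr2 : rk ⊤ = 2)
    (hsm : ∀ F G : Submodule R E, F < G → rk F < rk G) :
    -- (i) every weighted filtration of E has length at most one
    (∀ (s : ℕ) (ℰ : Fin (s + 1) → Submodule R E), StrictMono ℰ →
      ℰ (Fin.last s) = ⊤ → (∀ j : Fin s, ℰ j.castSucc ≠ ⊥) → s ≤ 1) ∧
    -- (ii) the identity for the length-one filtration 0 ⊂ F ⊂ E with weight 1
    (∀ F : Submodule R E, F ≠ ⊥ → F ≠ ⊤ → ∀ μ : ℚ,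
      IsGreatest {x : ℚ | ∃ t : Fin a → Fin 2,
        T (fun m => if t m = 0 then F else ⊤) ∧
        x = -∑ m : Fin a,
          ((∑ _j : Fin 1, (1 : ℚ) * (rk F : ℚ)) -
            (rk (⊤ : Submodule R E) : ℚ) *
              ∑ j ∈ Finset.univ.filter (fun j : Fin 1 => t m ≤ j.castSucc), (1 : ℚ))} μ →
      ((1 : ℚ) • ((rk F : ℚ) • P ⊤ - (rk (⊤ : Submodule R E) : ℚ) • P F)) + μ • δ
        = (rk F : ℚ) • P ⊤ - (rk (⊤ : Submodule R E) : ℚ) • P F +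
            ((rk (⊤ : Submodule R E) : ℚ) * (k F : ℚ) - (a : ℚ) * (rk F : ℚ)) • δ) ∧
    -- (iii) δ-semistable ↔ k-semistable
    (((∀ (s : ℕ) (ℰ : Fin (s + 1) → Submodule R E), StrictMono ℰ →
        ℰ (Fin.last s) = ⊤ → (∀ j : Fin s, ℰ j.castSucc ≠ ⊥) →
        ∀ α : Fin s → ℚ, (∀ j, 0 < α j) →
        ∀ μ : ℚ,
          IsGreatest {x : ℚ | ∃ t : Fin a → Fin (s + 1),
            T (fun m => ℰ (t m)) ∧
            x = -∑ m : Fin a,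
              ((∑ j : Fin s, α j * (rk (ℰ j.castSucc) : ℚ)) -
                (rk (⊤ : Submodule R E) : ℚ) *
                  ∑ j ∈ Finset.univ.filter (fun j : Fin s => t m ≤ j.castSucc), α j)} μ →
          polyLE 0
            ((∑ j : Fin s, α j •
                ((rk (ℰ j.castSucc) : ℚ) • P ⊤ -
                  (rk (⊤ : Submodule R E) : ℚ) • P (ℰ j.castSucc))) + μ • δ)) ↔
      (∀ F : Submodule R E, F ≠ ⊥ → F ≠ ⊤ →
        polyLE 0
          ((rk F : ℚ) • P ⊤ - (rk (⊤ : Submodule R E) : ℚ) • P F +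
            ((rk (⊤ : Submodule R E) : ℚ) * (k F : ℚ) - (a : ℚ) * (rk F : ℚ)) • δ))) ∧
    -- and δ-stable ↔ k-stable
    ((∀ (s : ℕ) (ℰ : Fin (s + 1) → Submodule R E), 0 < s → StrictMono ℰ →
        ℰ (Fin.last s) = ⊤ → (∀ j : Fin s, ℰ j.castSucc ≠ ⊥) →
        ∀ α : Fin s → ℚ, (∀ j, 0 < α j) →
        ∀ μ : ℚ,
          IsGreatest {x : ℚ | ∃ t : Fin a → Fin (s + 1),
            T (fun m => ℰ (t m)) ∧
            x = -∑ m : Fin a,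
              ((∑ j : Fin s, α j * (rk (ℰ j.castSucc) : ℚ)) -
                (rk (⊤ : Submodule R E) : ℚ) *
                  ∑ j ∈ Finset.univ.filter (fun j : Fin s => t m ≤ j.castSucc), α j)} μ →
          polyLT 0
            ((∑ j : Fin s, α j •
                ((rk (ℰ j.castSucc) : ℚ) • P ⊤ -
                  (rk (⊤ : Submodule R E) : ℚ) • P (ℰ j.castSucc))) + μ • δ)) ↔
      (∀ F : Submodule R E, F ≠ ⊥ → F ≠ ⊤ →
        polyLT 0
          ((rk F : ℚ) • P ⊤ - (rk (⊤ : Submodule R E) : ℚ) • P F +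
            ((rk (⊤ : Submodule R E) : ℚ) * (k F : ℚ) - (a : ℚ) * (rk F : ℚ)) • δ)))) := by
  have hmonole : ∀ A B : Submodule R E, A ≤ B → rk A ≤ rk B := by
    intro A B h
    rcases h.lt_or_eq with h' | h'
    · exact (hsm _ _ h').le
    · rw [h']
  have part1 : ∀ (s : ℕ) (ℰ : Fin (s + 1) → Submodule R E), StrictMono ℰ →
      ℰ (Fin.last s) = ⊤ → (∀ j : Fin s, ℰ j.castSucc ≠ ⊥) → s ≤ 1 := by
    intro s ℰ hmono hlast hne
    by_contra hcon
    push_neg at hcon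
    have h0lt : (⟨0, by omega⟩ : Fin (s + 1)) < ⟨1, by omega⟩ := Fin.lt_def.mpr Nat.zero_lt_one
    have h1lt : (⟨1, by omega⟩ : Fin (s + 1)) < ⟨2, by omega⟩ := Fin.lt_def.mpr Nat.one_lt_two
    have hb : ℰ ⟨0, by omega⟩ ≠ ⊥ := by
      have := hne ⟨0, by omega⟩
      simpa [Fin.castSucc_mk] using this
    have r0 : rk ⊥ < rk (ℰ ⟨0, by omega⟩) := hsm _ _ (bot_lt_iff_ne_bot.mpr hb)
    have r1 : rk (ℰ ⟨0, by omega⟩) < rk (ℰ ⟨1, by omega⟩) := hsm _ _ (hmono h0lt)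
    have r2 : rk (ℰ ⟨1, by omega⟩) < rk (ℰ ⟨2, by omega⟩) := hsm _ _ (hmono h1lt)
    have rle : rk (ℰ ⟨2, by omega⟩) ≤ rk (⊤ : Submodule R E) :=
      (hmonole _ _ (hmono.monotone (Fin.le_last _))).trans (le_of_eq (congrArg rk hlast))
    omega
  have hIG : ∀ (ℰ : Fin 2 → Submodule R E), ℰ 1 = ⊤ → ℰ 0 ≠ ⊤ → ∀ (α : Fin 1 → ℚ), 0 < α 0 →
      IsGreatest {x : ℚ | ∃ t : Fin a → Fin 2, T (fun m => ℰ (t m)) ∧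
        x = -∑ m : Fin a, ((∑ j : Fin 1, α j * (rk (ℰ j.castSucc) : ℚ)) -
          (rk (⊤ : Submodule R E) : ℚ) *
            ∑ j ∈ Finset.univ.filter (fun j : Fin 1 => t m ≤ j.castSucc), α j)}
        (α 0 * ((rk (⊤ : Submodule R E) : ℚ) * (k (ℰ 0) : ℚ) - (a : ℚ) * (rk (ℰ 0) : ℚ))) := by
    intro ℰ h1 h0 α hα
    have hK := key_aux a rk T hφ k hk (ℰ 0) h0 (α 0) hα
    have hset : {x : ℚ | ∃ t : Fin a → Fin 2, T (fun m => if t m = 0 then ℰ 0 else ⊤) ∧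
        x = -∑ m : Fin a, (α 0 * (rk (ℰ 0) : ℚ) - (rk (⊤ : Submodule R E) : ℚ) *
          (if t m = 0 then α 0 else 0))}
        = {x : ℚ | ∃ t : Fin a → Fin 2, T (fun m => ℰ (t m)) ∧
        x = -∑ m : Fin a, ((∑ j : Fin 1, α j * (rk (ℰ j.castSucc) : ℚ)) -
          (rk (⊤ : Submodule R E) : ℚ) *
            ∑ j ∈ Finset.univ.filter (fun j : Fin 1 => t m ≤ j.castSucc), α j)} := by
      ext x
      refine exists_congr fun t => and_congr ?_ ?_
      · have hfun : (fun m => if t m = 0 then ℰ 0 else ⊤) = (fun m => ℰ (t m)) := by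
          funext m
          have h2 : t m = 0 ∨ t m = 1 := by omega
          rcases h2 with h | h <;> simp [h, h1]
        rw [hfun]
      · have hform : -∑ m : Fin a, (α 0 * (rk (ℰ 0) : ℚ) - (rk (⊤ : Submodule R E) : ℚ) *
            (if t m = 0 then α 0 else 0))
            = -∑ m : Fin a, ((∑ j : Fin 1, α j * (rk (ℰ j.castSucc) : ℚ)) -
              (rk (⊤ : Submodule R E) : ℚ) *
                ∑ j ∈ Finset.univ.filter (fun j : Fin 1 => t m ≤ j.castSucc), α j) := by
          congr 1
          apply Finset.sum_congr rfl
          intro m _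
          simp [Finset.sum_filter, Fin.sum_univ_one, Fin.le_zero_iff]
        rw [hform]
    exact hset ▸ hK
  refine ⟨part1, ?_, ?_, ?_⟩
  · -- part (ii)
    intro F hbot htop μ hμ
    have hK := key_aux a rk T hφ k hk F htop 1 one_pos
    have hset : {x : ℚ | ∃ t : Fin a → Fin 2, T (fun m => if t m = 0 then F else ⊤) ∧
        x = -∑ m : Fin a, ((1 : ℚ) * (rk F : ℚ) - (rk (⊤ : Submodule R E) : ℚ) *
          (if t m = 0 then (1 : ℚ) else 0))}
        = {x : ℚ | ∃ t : Fin a → Fin 2, T (fun m => if t m = 0 then F else ⊤) ∧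
        x = -∑ m : Fin a,
          ((∑ _j : Fin 1, (1 : ℚ) * (rk F : ℚ)) -
            (rk (⊤ : Submodule R E) : ℚ) *
              ∑ j ∈ Finset.univ.filter (fun j : Fin 1 => t m ≤ j.castSucc), (1 : ℚ))} := by
      ext x
      refine exists_congr fun t => and_congr_right fun _ => ?_
      have hform : -∑ m : Fin a, ((1 : ℚ) * (rk F : ℚ) - (rk (⊤ : Submodule R E) : ℚ) *
          (if t m = 0 then (1 : ℚ) else 0))
          = -∑ m : Fin a,
            ((∑ _j : Fin 1, (1 : ℚ) * (rk F : ℚ)) -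
              (rk (⊤ : Submodule R E) : ℚ) *
                ∑ j ∈ Finset.univ.filter (fun j : Fin 1 => t m ≤ j.castSucc), (1 : ℚ)) := by
        congr 1
        apply Finset.sum_congr rfl
        intro m _
        by_cases h : t m = 0 <;>
          simp [h, Finset.filter_singleton, Fin.le_zero_iff, Finset.sum_filter,
            Fin.sum_univ_one]
      rw [hform]
    have hμv : μ = 1 * ((rk (⊤ : Submodule R E) : ℚ) * (k F : ℚ) - (a : ℚ) * (rk F : ℚ)) :=
      hμ.unique (hset ▸ hK)
    rw [hμv, one_smul, one_mul]
  · -- part (iii): semistable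
    constructor
    · intro hδs F hbot htop
      have hF : F < ⊤ := lt_top_iff_ne_top.mpr htop
      have hE : StrictMono ![F, (⊤ : Submodule R E)] := by
        rw [Fin.strictMono_iff_lt_succ]
        intro i
        fin_cases i
        simpa using hF
      have hg := hIG ![F, (⊤ : Submodule R E)] (by simp) htop
        (fun _ => 1) one_pos
      simp only [Matrix.cons_val_zero] at hg
      have h1 := hδs 1 ![F, (⊤ : Submodule R E)] hE rfl
        (fun j => by fin_cases j; simpa using hbot) (fun _ => 1) (fun _ => one_pos)
        (1 * ((rk (⊤ : Submodule R E) : ℚ) * (k F : ℚ) - (a : ℚ) * (rk F : ℚ))) hg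
      simpa [Fin.sum_univ_one] using h1
    · intro hks s ℰ hmono hlast hne α hα μ hμ
      have hs := part1 s ℰ hmono hlast hne
      interval_cases s
      · have hμ0 : μ = 0 := by
          rcases hμ.1 with ⟨t, _, ht⟩
          simpa using ht
        rw [hμ0]
        refine ⟨0, fun m _ => ?_⟩
        simp
      · have hlast' : ℰ 1 = ⊤ := hlast
        have h0top : ℰ 0 ≠ ⊤ := by
          have h01 := hmono (show (0 : Fin 2) < 1 by decide)
          rw [hlast'] at h01
          exact ne_top_of_lt h01
        have hg := hIG ℰ hlast' h0top α (hα 0)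
        have hμv : μ = α 0 * ((rk (⊤ : Submodule R E) : ℚ) * (k (ℰ 0) : ℚ) -
            (a : ℚ) * (rk (ℰ 0) : ℚ)) := hμ.unique hg
        have hP := hks (ℰ 0) (by simpa using hne 0) h0top
        have heq : (∑ j : Fin 1, α j • ((rk (ℰ j.castSucc) : ℚ) • P ⊤ -
              (rk (⊤ : Submodule R E) : ℚ) • P (ℰ j.castSucc))) + μ • δ
            = α 0 • ((rk (ℰ 0) : ℚ) • P ⊤ - (rk (⊤ : Submodule R E) : ℚ) • P (ℰ 0) +
              ((rk (⊤ : Submodule R E) : ℚ) * (k (ℰ 0) : ℚ) -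
                (a : ℚ) * (rk (ℰ 0) : ℚ)) • δ) := by
          rw [hμv, Fin.sum_univ_one, Fin.castSucc_zero, smul_add, mul_smul]
        rw [heq]
        exact polyLE_smul_aux (hα 0).le hP
  · -- part (iv): stable
    constructor
    · intro hδs F hbot htop
      have hF : F < ⊤ := lt_top_iff_ne_top.mpr htop
      have hE : StrictMono ![F, (⊤ : Submodule R E)] := by
        rw [Fin.strictMono_iff_lt_succ]
        intro i
        fin_cases i
        simpa using hF
      have hg := hIG ![F, (⊤ : Submodule R E)] (by simp) htop
        (fun _ => 1) one_pos
      simp only [Matrix.cons_val_zero] at hg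
      have h1 := hδs 1 ![F, (⊤ : Submodule R E)] Nat.one_pos hE rfl
        (fun j => by fin_cases j; simpa using hbot) (fun _ => 1) (fun _ => one_pos)
        (1 * ((rk (⊤ : Submodule R E) : ℚ) * (k F : ℚ) - (a : ℚ) * (rk F : ℚ))) hg
      simpa [Fin.sum_univ_one] using h1
    · intro hks s ℰ hspos hmono hlast hne α hα μ hμ
      have hs := part1 s ℰ hmono hlast hne
      have hs1 : s = 1 := by omega
      subst hs1
      have hlast' : ℰ 1 = ⊤ := hlast
      have h0top : ℰ 0 ≠ ⊤ := by
        have h01 := hmono (show (0 : Fin 2) < 1 by decide)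
        rw [hlast'] at h01
        exact ne_top_of_lt h01
      have hg := hIG ℰ hlast' h0top α (hα 0)
      have hμv : μ = α 0 * ((rk (⊤ : Submodule R E) : ℚ) * (k (ℰ 0) : ℚ) -
          (a : ℚ) * (rk (ℰ 0) : ℚ)) := hμ.unique hg
      have hP := hks (ℰ 0) (by simpa using hne 0) h0top
      have heq : (∑ j : Fin 1, α j • ((rk (ℰ j.castSucc) : ℚ) • P ⊤ -
            (rk (⊤ : Submodule R E) : ℚ) • P (ℰ j.castSucc))) + μ • δ
          = α 0 • ((rk (ℰ 0) : ℚ) • P ⊤ - (rk (⊤ : Submodule R E) : ℚ) • P (ℰ 0) +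
            ((rk (⊤ : Submodule R E) : ℚ) * (k (ℰ 0) : ℚ) -
              (a : ℚ) * (rk (ℰ 0) : ℚ)) • δ) := by
        rw [hμv, Fin.sum_univ_one, Fin.castSucc_zero, smul_add, mul_smul]
      rw [heq]
      exact polyLT_smul_aux (hα 0) hP
end

section
/- Additivity defect of μ for weighted filtrations: for every weighted filtration (E^•, α) indexed by I of a decorated sheaf (E,φ), μ_I(E^•, α; φ) ≤ Σ_{i∈I} μ(0 ⊂ E_i ⊂ E, α_i; φ). Consequently, if a filtration is non-critical (equality holds), then every subfiltration of it is also non-critical. -/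
section

variable {R E : Type} [CommRing R] [AddCommGroup E] [Module R E]

/-- The weight `γ_J^{(i)}` associated with the subfiltration of `ℰ` indexed by the
subset `J` (with weights `α`): `γ_J(i) = Σ_{j∈J} α_j·rk E_j − r·Σ_{j∈J, i ≤ j} α_j`. -/
def gammaJ (rk : Submodule R E → ℕ) {s : ℕ} (ℰ : Fin (s + 1) → Submodule R E)
    (α : Fin s → ℚ) (J : Finset (Fin s)) (i : Fin (s + 1)) : ℚ :=
  (∑ j ∈ J, α j * (rk (ℰ j.castSucc) : ℚ)) -
    (rk (⊤ : Submodule R E) : ℚ) *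
      ∑ j ∈ J.filter (fun j : Fin s => i ≤ j.castSucc), α j

/-- The set of values `−Σ_m γ_J(t m)` over tuples `t` whose entries belong to the
subfiltration indexed by `J` (or to `E` itself) and on which `φ` is nonvanishing;
`μ` of the subfiltration is the greatest element of this set. -/
def muSetJ (rk : Submodule R E → ℕ) (a : ℕ) (T : (Fin a → Submodule R E) → Prop)
    {s : ℕ} (ℰ : Fin (s + 1) → Submodule R E) (α : Fin s → ℚ)
    (J : Finset (Fin s)) : Set ℚ :=
  {x | ∃ t : Fin a → Fin (s + 1),
    (∀ m, t m = Fin.last s ∨ ∃ j ∈ J, t m = j.castSucc) ∧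
    T (fun m => ℰ (t m)) ∧
    x = -∑ m : Fin a, gammaJ rk ℰ α J (t m)}

lemma gammaJ_singleton (rk : Submodule R E → ℕ) {s : ℕ} (ℰ : Fin (s + 1) → Submodule R E)
    (α : Fin s → ℚ) (j : Fin s) (k : Fin (s + 1)) :
    gammaJ rk ℰ α {j} k = α j * (rk (ℰ j.castSucc) : ℚ) -
      (rk (⊤ : Submodule R E) : ℚ) * (if k ≤ j.castSucc then α j else 0) := by
  unfold gammaJ
  rw [Finset.filter_singleton]
  split <;> simp

lemma gammaJ_eq_sum (rk : Submodule R E → ℕ) {s : ℕ} (ℰ : Fin (s + 1) → Submodule R E)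
    (α : Fin s → ℚ) (J : Finset (Fin s)) (k : Fin (s + 1)) :
    gammaJ rk ℰ α J k = ∑ j ∈ J, gammaJ rk ℰ α {j} k := by
  rw [Finset.sum_congr rfl (fun j _ => gammaJ_singleton rk ℰ α j k),
    Finset.sum_sub_distrib, ← Finset.mul_sum, ← Finset.sum_filter]
  rfl

lemma gammaJ_congr (rk : Submodule R E → ℕ) {s : ℕ} (ℰ : Fin (s + 1) → Submodule R E)
    (α : Fin s → ℚ) (J : Finset (Fin s)) (k₁ k₂ : Fin (s + 1))
    (h : ∀ j ∈ J, (k₁ ≤ j.castSucc ↔ k₂ ≤ j.castSucc)) :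
    gammaJ rk ℰ α J k₁ = gammaJ rk ℰ α J k₂ := by
  unfold gammaJ
  rw [Finset.filter_congr (fun j hj => by simpa using h j hj)]

/-- Projection of an index into the subfiltration indexed by `J`. -/
lemma proj_exists {s : ℕ} (J : Finset (Fin s)) (k : Fin (s + 1)) :
    ∃ k' : Fin (s + 1), (k' = Fin.last s ∨ ∃ j ∈ J, k' = j.castSucc) ∧ k ≤ k' ∧
      ∀ j ∈ J, (k ≤ j.castSucc ↔ k' ≤ j.castSucc) := by
  by_cases h : (J.filter (fun j : Fin s => k ≤ j.castSucc)).Nonempty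
  · set S := J.filter (fun j : Fin s => k ≤ j.castSucc) with hS
    have hm : S.min' h ∈ J ∧ k ≤ (S.min' h).castSucc := Finset.mem_filter.1 (S.min'_mem h)
    refine ⟨(S.min' h).castSucc, Or.inr ⟨S.min' h, hm.1, rfl⟩, hm.2, fun j hj => ?_⟩
    constructor
    · intro hkj
      have hjS : j ∈ S := Finset.mem_filter.2 ⟨hj, hkj⟩
      exact Fin.castSucc_le_castSucc_iff.2 (S.min'_le j hjS)
    · intro hj'
      exact le_trans hm.2 hj'
  · refine ⟨Fin.last s, Or.inl rfl, Fin.le_last k, fun j hj => ?_⟩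
    constructor
    · intro hkj
      have hjS : j ∈ J.filter (fun j : Fin s => k ≤ j.castSucc) :=
        Finset.mem_filter.mpr ⟨hj, hkj⟩
      exact absurd ⟨j, hjS⟩ h
    · intro hj'
      exact absurd hj' (Fin.castSucc_lt_last j).not_ge

lemma neg_sum_gammaJ {a : ℕ} (rk : Submodule R E → ℕ) {s : ℕ}
    (ℰ : Fin (s + 1) → Submodule R E) (α : Fin s → ℚ) (J : Finset (Fin s))
    (t : Fin a → Fin (s + 1)) :
    -∑ m : Fin a, gammaJ rk ℰ α J (t m) =
      ∑ i ∈ J, -∑ m : Fin a, gammaJ rk ℰ α {i} (t m) := by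
  simp only [gammaJ_eq_sum rk ℰ α J]
  rw [Finset.sum_comm, ← Finset.sum_neg_distrib]

/-- Projecting a tuple with nonvanishing `φ` into the subfiltration indexed by `J`
always produces an element of `muSetJ J` with the same `gammaJ`-value. -/
lemma mem_muSetJ_of_T {a : ℕ} (rk : Submodule R E → ℕ)
    (T : (Fin a → Submodule R E) → Prop)
    (hTmono : ∀ f g : Fin a → Submodule R E, (∀ i, f i ≤ g i) → T f → T g)
    {s : ℕ} (ℰ : Fin (s + 1) → Submodule R E) (hmono : Monotone ℰ)
    (α : Fin s → ℚ) (J : Finset (Fin s)) (t : Fin a → Fin (s + 1))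
    (hT : T (fun m => ℰ (t m))) :
    (-∑ m : Fin a, gammaJ rk ℰ α J (t m)) ∈ muSetJ rk a T ℰ α J := by
  choose t' ht'mem ht'le ht'iff using fun m => proj_exists J (t m)
  refine ⟨t', ht'mem, hTmono _ _ (fun m => hmono (ht'le m)) hT, ?_⟩
  congr 1
  exact Finset.sum_congr rfl fun m _ => gammaJ_congr rk ℰ α J _ _ (ht'iff m)

lemma muJ_le_sum {a : ℕ} (rk : Submodule R E → ℕ)
    (T : (Fin a → Submodule R E) → Prop)
    (hTmono : ∀ f g : Fin a → Submodule R E, (∀ i, f i ≤ g i) → T f → T g)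
    {s : ℕ} (ℰ : Fin (s + 1) → Submodule R E) (hmono : Monotone ℰ)
    (α : Fin s → ℚ) (J : Finset (Fin s)) (μJ : ℚ)
    (hμJ : IsGreatest (muSetJ rk a T ℰ α J) μJ)
    (ν : Fin s → ℚ) (hν : ∀ i ∈ J, IsGreatest (muSetJ rk a T ℰ α {i}) (ν i)) :
    μJ ≤ ∑ i ∈ J, ν i := by
  obtain ⟨t, -, hT, ht⟩ := hμJ.1
  rw [ht, neg_sum_gammaJ rk ℰ α J t]
  exact Finset.sum_le_sum fun i hi =>
    (hν i hi).2 (mem_muSetJ_of_T rk T hTmono ℰ hmono α {i} t hT)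

/-- Additivity defect of `μ` for weighted filtrations: for every weighted
filtration `(E^•, α)`, `μ_I(E^•,α;φ) ≤ Σ_{i∈I} μ(0⊂E_i⊂E, α_i; φ)`.
Consequently, if a filtration is non-critical (equality holds), then every
subfiltration of it (indexed by `J ⊆ I`, with the inherited weights) is also
non-critical. -/
theorem stmt_16 (a : ℕ) (rk : Submodule R E → ℕ)
    (T : (Fin a → Submodule R E) → Prop)
    (hTmono : ∀ f g : Fin a → Submodule R E, (∀ i, f i ≤ g i) → T f → T g) :
    ∀ (s : ℕ) (ℰ : Fin (s + 1) → Submodule R E), StrictMono ℰ →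
      ℰ (Fin.last s) = ⊤ → (∀ j : Fin s, ℰ j.castSucc ≠ ⊥) →
      ∀ α : Fin s → ℚ, (∀ j, 0 < α j) →
      -- μ_I ≤ Σ_i μ(0 ⊂ E_i ⊂ E, α_i)
      ((∀ μ : ℚ, IsGreatest (muSetJ rk a T ℰ α Finset.univ) μ →
        ∀ ν : Fin s → ℚ, (∀ i, IsGreatest (muSetJ rk a T ℰ α {i}) (ν i)) →
          μ ≤ ∑ i : Fin s, ν i) ∧
      -- non-critical filtrations have non-critical subfiltrations
      ((∃ μ : ℚ, ∃ ν : Fin s → ℚ, IsGreatest (muSetJ rk a T ℰ α Finset.univ) μ ∧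
          (∀ i, IsGreatest (muSetJ rk a T ℰ α {i}) (ν i)) ∧ μ = ∑ i : Fin s, ν i) →
        ∀ J : Finset (Fin s), ∀ μJ : ℚ, IsGreatest (muSetJ rk a T ℰ α J) μJ →
          ∀ ν : Fin s → ℚ, (∀ i ∈ J, IsGreatest (muSetJ rk a T ℰ α {i}) (ν i)) →
            μJ = ∑ i ∈ J, ν i)) := by
  intro s ℰ hsm _ _ α _
  have hmono : Monotone ℰ := hsm.monotone
  constructor
  · intro μ hμ ν hν
    exact muJ_le_sum rk T hTmono ℰ hmono α Finset.univ μ hμ ν fun i _ => hν i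
  · rintro ⟨μ, ν₀, hμ, hν₀, heq⟩ J μJ hμJ ν hν
    obtain ⟨t, -, hT, ht⟩ := hμ.1
    set f : Fin s → ℚ := fun i => -∑ m : Fin a, gammaJ rk ℰ α {i} (t m) with hf
    have hfle : ∀ i ∈ Finset.univ, f i ≤ ν₀ i := fun i _ =>
      (hν₀ i).2 (mem_muSetJ_of_T rk T hTmono ℰ hmono α {i} t hT)
    have hsum : ∑ i : Fin s, f i = ∑ i : Fin s, ν₀ i := by
      rw [← heq, ht, neg_sum_gammaJ rk ℰ α Finset.univ t]
    have hfeq : ∀ i ∈ Finset.univ, f i = ν₀ i :=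
      ((Finset.sum_eq_sum_iff_of_le hfle).1 hsum)
    have hνν₀ : ∀ i ∈ J, ν i = ν₀ i := fun i hi => (hν i hi).unique (hν₀ i)
    have hlow : (∑ i ∈ J, ν i) ≤ μJ := by
      have hval : (∑ i ∈ J, ν i) = -∑ m : Fin a, gammaJ rk ℰ α J (t m) := by
        rw [neg_sum_gammaJ rk ℰ α J t]
        exact Finset.sum_congr rfl fun i hi => by
          rw [hνν₀ i hi, ← hfeq i (Finset.mem_univ i)]
      rw [hval]
      exact hμJ.2 (mem_muSetJ_of_T rk T hTmono ℰ hmono α J t hT)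
    exact le_antisymm (muJ_le_sum rk T hTmono ℰ hmono α J μJ hμJ ν hν) hlow

end
end
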